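/- arXiv:math/9903073 — 2 statements merged into one kernel-verified Lean document; each statement's English description precedes it below -/
import Mathlib

section
/- For every nonnegative integer m and t ≥ 1, ∫₁ᵗ s^{-2} h₀(s) N_m(s) ds = N_{m+1}(t) - h(t) N_m(t); in particular this integral is bounded by N_{m+1}(t). -/
/-!
Splitting the integral defining `h` at `s = t` gives, for `t ≥ 1`, the closed form
`h(t) = h₀(t)/t + t^{-γ}/γ`, hence `h' = -t⁻² h₀`. So `N_{m+1} - h N_m` has derivative
`s^{-γ} h^{m+1} + s⁻² h₀ N_m - h s^{-γ} h^m = s⁻² h₀ N_m` and vanishes at `1`, which gives the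
identity; the bound follows because `h` and `N_m` are nonnegative.
-/

open MeasureTheory Real

noncomputable def h0 (γ t : ℝ) : ℝ := ∫ s in (1:ℝ)..t, s ^ (-γ)

noncomputable def hfun (γ t : ℝ) : ℝ := ∫ s in Set.Ioi (1:ℝ), s ^ (-γ) * (max t s)⁻¹

noncomputable def Nfun (γ : ℝ) (m : ℕ) (t : ℝ) : ℝ := ∫ s in (1:ℝ)..t, s ^ (-γ) * (hfun γ s) ^ m

noncomputable def Qfun (γ : ℝ) (m : ℕ) (t : ℝ) : ℝ :=
  ∫ s in Set.Ioi (1:ℝ), s ^ (-γ) * (max t s)⁻¹ * (hfun γ s) ^ m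

noncomputable def Pfun (γ : ℝ) (m : ℕ) (t : ℝ) : ℝ :=
  ∫ s in Set.Ioi (1:ℝ), s ^ (-γ) * hfun γ (max t s) * (hfun γ s) ^ m

noncomputable def Rfun (γ : ℝ) (m : ℕ) (t : ℝ) : ℝ :=
  ∫ s in Set.Ioi t, s ^ (-2 : ℝ) * Pfun γ m s

noncomputable def hfunClosed (γ t : ℝ) : ℝ := t⁻¹ * h0 γ t + t ^ (-γ) / γ

lemma hasDerivAt_h0 (γ : ℝ) {x : ℝ} (hx : 0 < x) : HasDerivAt (h0 γ) (x ^ (-γ)) x := by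
  have hcont : ContinuousOn (fun s : ℝ => s ^ (-γ)) (Set.Ioi 0) :=
    continuousOn_id.rpow_const fun s hs => Or.inl (ne_of_gt hs)
  refine intervalIntegral.integral_hasDerivAt_right ?_
    (hcont.stronglyMeasurableAtFilter isOpen_Ioi x hx)
    (continuousAt_rpow_const x (-γ) (Or.inl hx.ne'))
  exact (hcont.mono fun s hs => lt_of_lt_of_le (lt_min one_pos hx) hs.1).intervalIntegrable

lemma hasDerivAt_hfunClosed {γ : ℝ} (hγ : γ ≠ 0) {x : ℝ} (hx : 0 < x) :
    HasDerivAt (hfunClosed γ) (-(x ^ (-2 : ℝ)) * h0 γ x) x := by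
  have hd : HasDerivAt (hfunClosed γ)
      (-(x ^ 2)⁻¹ * h0 γ x + x⁻¹ * x ^ (-γ) + -γ * x ^ (-γ - 1) / γ) x :=
    ((hasDerivAt_inv hx.ne').mul (hasDerivAt_h0 γ hx)).add
      ((hasDerivAt_rpow_const (Or.inl hx.ne')).div_const γ)
  convert hd using 1
  rw [inv_mul_eq_div, ← rpow_sub_one hx.ne', rpow_neg hx.le, rpow_two]
  field_simp
  ring

lemma integral_Ioi_rpow_mul_inv {γ : ℝ} (hγ : 0 < γ) {u : ℝ} (hu : 0 < u) :
    IntegrableOn (fun s : ℝ => s ^ (-γ) * s⁻¹) (Set.Ioi u) ∧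
      ∫ s in Set.Ioi u, s ^ (-γ) * s⁻¹ = u ^ (-γ) / γ := by
  have hexp : -γ - 1 < -1 := by linarith
  have heq : Set.EqOn (fun s : ℝ => s ^ (-γ - 1)) (fun s => s ^ (-γ) * s⁻¹) (Set.Ioi u) :=
    fun s (hs : u < s) => by
      dsimp only
      rw [rpow_sub_one (hu.trans hs).ne', div_eq_mul_inv]
  refine ⟨(integrableOn_Ioi_rpow_of_lt hexp hu).congr_fun heq measurableSet_Ioi, ?_⟩
  rw [← setIntegral_congr_fun measurableSet_Ioi heq, integral_Ioi_rpow_of_lt hexp hu,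
    sub_add_cancel]
  field_simp

lemma hfun_eq_hfunClosed {γ : ℝ} (hγ : 0 < γ) {u : ℝ} (hu : 1 ≤ u) :
    hfun γ u = hfunClosed γ u := by
  have hu0 : 0 < u := one_pos.trans_le hu
  obtain ⟨hint_tail, htail⟩ := integral_Ioi_rpow_mul_inv hγ hu0
  have hhead : Set.EqOn (fun s : ℝ => s ^ (-γ) * (max u s)⁻¹) (fun s => s ^ (-γ) * u⁻¹)
      (Set.Ioc 1 u) := fun s hs => by simp only [max_eq_left hs.2]
  have htail_eq : Set.EqOn (fun s : ℝ => s ^ (-γ) * (max u s)⁻¹) (fun s => s ^ (-γ) * s⁻¹)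
      (Set.Ioi u) := fun s (hs : u < s) => by simp only [max_eq_right hs.le]
  have hint_head : IntegrableOn (fun s : ℝ => s ^ (-γ) * u⁻¹) (Set.Ioc 1 u) :=
    ((intervalIntegral.intervalIntegrable_rpow
      (Or.inr (Set.notMem_uIcc_of_lt one_pos hu0))).mul_const _).1
  rw [hfun, ← Set.Ioc_union_Ioi_eq_Ioi hu,
    setIntegral_union (Set.Ioc_disjoint_Ioi le_rfl) measurableSet_Ioi
      (hint_head.congr_fun hhead.symm measurableSet_Ioc)
      (hint_tail.congr_fun htail_eq.symm measurableSet_Ioi),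
    setIntegral_congr_fun measurableSet_Ioc hhead, setIntegral_congr_fun measurableSet_Ioi htail_eq,
    htail, integral_mul_const, ← intervalIntegral.integral_of_le hu, hfunClosed, h0, mul_comm]

lemma hfun_max_one (γ s : ℝ) : hfun γ s = hfun γ (max 1 s) :=
  setIntegral_congr_fun measurableSet_Ioi fun x (hx : 1 < x) => by
    rw [max_comm 1 s, max_assoc, max_eq_right hx.le]

lemma continuous_hfun {γ : ℝ} (hγ : 0 < γ) : Continuous (hfun γ) := by
  have heq : hfun γ = fun s => hfunClosed γ (max 1 s) := funext fun s => by
    rw [hfun_max_one, hfun_eq_hfunClosed hγ (le_max_left 1 s)]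
  rw [heq, continuous_iff_continuousAt]
  intro s
  exact (hasDerivAt_hfunClosed hγ.ne' (one_pos.trans_le (le_max_left 1 s))).continuousAt.comp
    (continuous_const.max continuous_id).continuousAt

lemma hasDerivAt_Nfun {γ : ℝ} (hγ : 0 < γ) (m : ℕ) {x : ℝ} (hx : 0 < x) :
    HasDerivAt (Nfun γ m) (x ^ (-γ) * hfun γ x ^ m) x := by
  have hcont : ContinuousOn (fun s : ℝ => s ^ (-γ) * hfun γ s ^ m) (Set.Ioi 0) :=
    (continuousOn_id.rpow_const fun s hs => Or.inl (ne_of_gt hs)).mul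
      ((continuous_hfun hγ).pow m).continuousOn
  refine intervalIntegral.integral_hasDerivAt_right ?_
    (hcont.stronglyMeasurableAtFilter isOpen_Ioi x hx) (hcont.continuousAt (Ioi_mem_nhds hx))
  exact (hcont.mono fun s hs => lt_of_lt_of_le (lt_min one_pos hx) hs.1).intervalIntegrable

lemma hfun_nonneg (γ s : ℝ) : 0 ≤ hfun γ s :=
  setIntegral_nonneg measurableSet_Ioi fun x (hx : 1 < x) =>
    mul_nonneg (rpow_nonneg (by linarith) _) (inv_nonneg.2 ((zero_le_one.trans hx.le).trans
      (le_max_right s x)))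

lemma Nfun_nonneg (γ : ℝ) (m : ℕ) {t : ℝ} (ht : 1 ≤ t) : 0 ≤ Nfun γ m t :=
  intervalIntegral.integral_nonneg ht fun x hx =>
    mul_nonneg (rpow_nonneg (by linarith [hx.1]) _) (pow_nonneg (hfun_nonneg γ x) m)

lemma hasDerivAt_Nfun_succ_sub_mul {γ : ℝ} (hγ : 0 < γ) (m : ℕ) {x : ℝ} (hx : 1 ≤ x) :
    HasDerivAt (fun y => Nfun γ (m + 1) y - hfunClosed γ y * Nfun γ m y)
      (x ^ (-2 : ℝ) * h0 γ x * Nfun γ m x) x := by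
  have hx0 : 0 < x := one_pos.trans_le hx
  refine ((hasDerivAt_Nfun hγ (m + 1) hx0).sub ((hasDerivAt_hfunClosed hγ.ne' hx0).mul
    (hasDerivAt_Nfun hγ m hx0))).congr_deriv ?_
  rw [← hfun_eq_hfunClosed hγ hx, pow_succ]
  ring

theorem stmt_9_general (γ t : ℝ) (hγ : 0 < γ) (ht : 1 ≤ t) (m : ℕ) :
    (∫ s in (1:ℝ)..t, s ^ (-2 : ℝ) * h0 γ s * Nfun γ m s)
      = Nfun γ (m + 1) t - hfun γ t * Nfun γ m t ∧
    (∫ s in (1:ℝ)..t, s ^ (-2 : ℝ) * h0 γ s * Nfun γ m s) ≤ Nfun γ (m + 1) t := by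
  have hIcc : ∀ x ∈ Set.uIcc 1 t, 1 ≤ x := fun x hx => by
    rw [Set.uIcc_of_le ht] at hx
    exact hx.1
  have hint : IntervalIntegrable (fun s => s ^ (-2 : ℝ) * h0 γ s * Nfun γ m s) volume 1 t :=
    ContinuousOn.intervalIntegrable fun x hx =>
      have hx0 : 0 < x := one_pos.trans_le (hIcc x hx)
      (((continuousAt_rpow_const x _ (Or.inl hx0.ne')).mul
        (hasDerivAt_h0 γ hx0).continuousAt).mul
          (hasDerivAt_Nfun hγ m hx0).continuousAt).continuousWithinAt
  have hFTC := intervalIntegral.integral_eq_sub_of_hasDerivAt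
    (fun x hx => hasDerivAt_Nfun_succ_sub_mul hγ m (hIcc x hx)) hint
  have hidentity : (∫ s in (1:ℝ)..t, s ^ (-2 : ℝ) * h0 γ s * Nfun γ m s)
      = Nfun γ (m + 1) t - hfun γ t * Nfun γ m t := by
    rw [hFTC, hfun_eq_hfunClosed hγ ht]
    simp only [Nfun, intervalIntegral.integral_same, mul_zero, sub_zero]
  refine ⟨hidentity, hidentity ▸ sub_le_self _ ?_⟩
  exact mul_nonneg (hfun_nonneg γ t) (Nfun_nonneg γ m ht)

theorem stmt_9 (γ t : ℝ) (hγ : 0 < γ) (hγ1 : γ ≤ 1) (ht : 1 ≤ t) (m : ℕ) :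
    (∫ s in (1:ℝ)..t, s ^ (-2 : ℝ) * h0 γ s * Nfun γ m s)
      = Nfun γ (m + 1) t - hfun γ t * Nfun γ m t ∧
    (∫ s in (1:ℝ)..t, s ^ (-2 : ℝ) * h0 γ s * Nfun γ m s) ≤ Nfun γ (m + 1) t :=
  stmt_9_general γ t hγ ht m
end

section
/- Let a, b > 0, t₀ > 1, and let y, z : [1, ∞) → [0, ∞) be continuously differentiable with y(t₀) = y₀, z(t₀) = z₀, satisfying |y'(t)| ≤ t^{-2} h₀(t) b y(t) + t^{-2} a z(t) and |z'(t)| ≤ t^{-2} h₀(t) b z(t) + t^{-γ} a y(t), where h₀(t) = ∫₁ᵗ s^{-γ} ds. Define ȳ(t), z̄(t) by (y(t), z(t)) = (ȳ(t), z̄(t)) exp(b|h(t) - h(t₀)|) with h(t) = ∫₁^∞ s^{-γ}(max(t,s))^{-1} ds. Then for t ≥ t₀ with γ t₀^γ ≥ 2a², one has ȳ(t) ≤ 2(y₀ + a z₀ t₀^{-1}) and z̄(t) ≤ z₀ + 2a(y₀ + a z₀ t₀^{-1}) h₀(t). -/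
open MeasureTheory Real

/-!
Since `h' = -t⁻² h₀`, the weight `exp (b (h t - h t₀))` absorbs the `h₀`-terms: `Y = y e` and
`Z = z e` satisfy `Y' ≤ a t⁻² Z` and `Z' ≤ a t^(-γ) Y` on `[t₀, ∞)`. If `Y ≤ K` on `[t₀, t]`,
integrating the second inequality gives `Z ≤ z₀ + a K (h₀ - h₀ t₀)`, and then the first gives
`Y ≤ y₀ + a z₀ / t₀ + a² K ∫_{t₀}^∞ s⁻² (h₀ s - h₀ t₀) ds = y₀ + a z₀ / t₀ + a² K t₀^(-γ) / γ`.
For `K = max Y` on `[t₀, t]` the size condition makes the last term at most `K / 2`, whence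
`K ≤ 2 (y₀ + a z₀ / t₀)`.
-/

open Set

section H0

variable {γ : ℝ}

lemma h0_hasDerivAt {t : ℝ} (ht : 0 < t) : HasDerivAt (h0 γ) (t ^ (-γ)) t :=
  intervalIntegral.integral_hasDerivAt_right
    (intervalIntegral.intervalIntegrable_rpow (Or.inr fun hmem => by
      rcases mem_uIcc.1 hmem with h | h <;> linarith [h.1, h.2]))
    (by fun_prop : Measurable fun s : ℝ => s ^ (-γ)).stronglyMeasurable.stronglyMeasurableAtFilter
    (continuousAt_rpow_const t (-γ) (Or.inl ht.ne'))

lemma h0_monotoneOn : MonotoneOn (h0 γ) (Ioi 0) := by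
  refine monotoneOn_of_hasDerivWithinAt_nonneg (f' := fun t => t ^ (-γ)) (convex_Ioi 0)
    (fun t ht => (h0_hasDerivAt ht).continuousAt.continuousWithinAt) ?_ ?_ <;>
    rw [interior_Ioi] <;> intro t ht
  · exact (h0_hasDerivAt ht).hasDerivWithinAt
  · exact rpow_nonneg (le_of_lt ht) _

lemma h0_nonneg {t : ℝ} (ht : 1 ≤ t) : 0 ≤ h0 γ t := by
  simpa [h0] using h0_monotoneOn (γ := γ) (mem_Ioi.2 one_pos) (mem_Ioi.2 (one_pos.trans_le ht)) ht

lemma hasDerivAt_h0_sub_div_add_rpow_div (hγ : γ ≠ 0) (c : ℝ) {t : ℝ} (ht : 0 < t) :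
    HasDerivAt (fun u => (h0 γ u - c) / u + u ^ (-γ) / γ)
      (-(t ^ (-2:ℝ) * (h0 γ t - c))) t := by
  refine ((((h0_hasDerivAt ht).sub_const c).div (hasDerivAt_id' t) ht.ne').add
    ((hasDerivAt_rpow_const (p := -γ) (Or.inl ht.ne')).div_const γ)).congr_deriv ?_
  rw [rpow_sub_one ht.ne', rpow_neg_ofNat]
  field_simp
  ring

end H0

section Hfun

variable {γ : ℝ}

lemma hfun_eq (hγ : 0 < γ) {t : ℝ} (ht : 1 ≤ t) : hfun γ t = h0 γ t / t + t ^ (-γ) / γ := by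
  have ht0 : 0 < t := one_pos.trans_le ht
  have h_tail : ∀ s ∈ Ioi t, s ^ (-γ) * (max t s)⁻¹ = s ^ (-γ - 1) := fun s hs => by
    rw [max_eq_right (le_of_lt hs), rpow_sub_one (ht0.trans hs).ne', div_eq_mul_inv]
  have h_int_head : IntegrableOn (fun s : ℝ => s ^ (-γ) * (max t s)⁻¹) (Ioc 1 t) := by
    refine (ContinuousOn.integrableOn_Icc ?_).mono_set Ioc_subset_Icc_self
    exact ((continuousOn_id.rpow_const fun s hs => Or.inl (one_pos.trans_le hs.1).ne').mul
      ((continuous_const.max continuous_id).continuousOn.inv₀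
        fun s _ => (ht0.trans_le (le_max_left _ _)).ne'))
  have h_int_tail : IntegrableOn (fun s : ℝ => s ^ (-γ) * (max t s)⁻¹) (Ioi t) :=
    (integrableOn_Ioi_rpow_of_lt (by linarith) ht0).congr_fun
      (fun s hs => (h_tail s hs).symm) measurableSet_Ioi
  rw [hfun, ← Ioc_union_Ioi_eq_Ioi ht,
    setIntegral_union (Ioc_disjoint_Ioi le_rfl) measurableSet_Ioi h_int_head h_int_tail,
    setIntegral_congr_fun measurableSet_Ioc (fun s hs => by rw [max_eq_left hs.2]),
    setIntegral_congr_fun measurableSet_Ioi h_tail, integral_mul_const,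
    integral_Ioi_rpow_of_lt (by linarith) ht0, h0, intervalIntegral.integral_of_le ht,
    sub_add_cancel, div_neg, neg_div, neg_neg, div_eq_mul_inv, div_eq_mul_inv]

lemma hfun_hasDerivAt (hγ : 0 < γ) {t : ℝ} (ht : 1 < t) :
    HasDerivAt (hfun γ) (-(t ^ (-2:ℝ) * h0 γ t)) t := by
  have := hasDerivAt_h0_sub_div_add_rpow_div hγ.ne' 0 (one_pos.trans ht)
  simp only [sub_zero] at this
  exact this.congr_of_eventuallyEq <|
    (eventually_gt_nhds ht).mono fun u hu => hfun_eq hγ (le_of_lt hu)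

lemma hfun_antitoneOn (hγ : 0 < γ) : AntitoneOn (hfun γ) (Ioi 1) := by
  refine antitoneOn_of_hasDerivWithinAt_nonpos (f' := fun t => -(t ^ (-2:ℝ) * h0 γ t))
    (convex_Ioi 1) (fun t ht => (hfun_hasDerivAt hγ ht).continuousAt.continuousWithinAt) ?_ ?_ <;>
    rw [interior_Ioi] <;> intro t ht
  · exact (hfun_hasDerivAt hγ ht).hasDerivWithinAt
  · exact neg_nonpos.2 (mul_nonneg (rpow_nonneg (by linarith [mem_Ioi.1 ht]) _)
      (h0_nonneg (le_of_lt ht)))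

end Hfun

structure IsSubsolution (γ a t₀ : ℝ) (Y Z : ℝ → ℝ) : Prop where
  differentiableAt_fst : ∀ s ∈ Ici t₀, DifferentiableAt ℝ Y s
  differentiableAt_snd : ∀ s ∈ Ici t₀, DifferentiableAt ℝ Z s
  deriv_fst_le : ∀ s ∈ Ici t₀, deriv Y s ≤ a * s ^ (-2:ℝ) * Z s
  deriv_snd_le : ∀ s ∈ Ici t₀, deriv Z s ≤ a * s ^ (-γ) * Y s

namespace IsSubsolution

variable {γ a t₀ K v : ℝ} {Y Z : ℝ → ℝ}

lemma snd_le (hYZ : IsSubsolution γ a t₀ Y Z) (ha : 0 ≤ a) (ht₀ : 0 < t₀) (hv : t₀ ≤ v)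
    (hK : ∀ s ∈ Icc t₀ v, Y s ≤ K) :
    Z v ≤ Z t₀ + a * K * (h0 γ v - h0 γ t₀) := by
  have hB : ∀ s ∈ Ici t₀, HasDerivAt (fun s => Z t₀ + a * K * (h0 γ s - h0 γ t₀))
      (a * K * s ^ (-γ)) s := fun s hs =>
    (((h0_hasDerivAt (ht₀.trans_le hs)).sub_const _).const_mul _).const_add _
  refine image_le_of_deriv_right_le_deriv_boundary (f' := deriv Z)
    (fun s hs => (hYZ.differentiableAt_snd s hs.1).continuousAt.continuousWithinAt)
    (fun s hs => (hYZ.differentiableAt_snd s hs.1).hasDerivAt.hasDerivWithinAt) (by simp)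
    (fun s hs => (hB s hs.1).continuousAt.continuousWithinAt)
    (fun s hs => (hB s hs.1).hasDerivWithinAt) (fun s hs => ?_) ⟨hv, le_rfl⟩
  calc deriv Z s ≤ a * s ^ (-γ) * Y s := hYZ.deriv_snd_le s hs.1
    _ ≤ a * s ^ (-γ) * K := mul_le_mul_of_nonneg_left (hK s (Ico_subset_Icc_self hs))
        (mul_nonneg ha (rpow_nonneg (ht₀.le.trans hs.1) _))
    _ = a * K * s ^ (-γ) := by ring

lemma fst_le (hYZ : IsSubsolution γ a t₀ Y Z) (hγ : 0 < γ) (ha : 0 ≤ a) (ht₀ : 0 < t₀)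
    (hZ₀ : 0 ≤ Z t₀) (hK₀ : 0 ≤ K) (hv : t₀ ≤ v) (hK : ∀ s ∈ Icc t₀ v, Y s ≤ K) :
    Y v ≤ Y t₀ + a * Z t₀ * t₀⁻¹ + a ^ 2 * K * (t₀ ^ (-γ) / γ) := by
  -- `T` is an antiderivative of `-s⁻² (h₀ s - h₀ t₀)` with `T ≥ 0` and `T t₀ = t₀^(-γ) / γ`.
  set T : ℝ → ℝ := fun s => (h0 γ s - h0 γ t₀) / s + s ^ (-γ) / γ
  set B : ℝ → ℝ := fun s => Y t₀ + a * Z t₀ * (t₀⁻¹ - s⁻¹) + a ^ 2 * K * (T t₀ - T s)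
  have hB : ∀ s ∈ Ici t₀, HasDerivAt B (a * s ^ (-2:ℝ) * (Z t₀ + a * K * (h0 γ s - h0 γ t₀))) s := by
    intro s hs
    have hs₀ : 0 < s := ht₀.trans_le hs
    refine ((((hasDerivAt_inv hs₀.ne').const_sub _).const_mul _).const_add _).add
      (((hasDerivAt_h0_sub_div_add_rpow_div hγ.ne' (h0 γ t₀) hs₀).const_sub _).const_mul _)
      |>.congr_deriv ?_
    simp only [rpow_neg_ofNat, zpow_neg, zpow_ofNat]
    ring
  have hBv : B v ≤ Y t₀ + a * Z t₀ * t₀⁻¹ + a ^ 2 * K * (t₀ ^ (-γ) / γ) := by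
    have hv₀ : 0 < v := ht₀.trans_le hv
    have hT : 0 ≤ T v := add_nonneg
      (div_nonneg (sub_nonneg.2 (h0_monotoneOn ht₀ hv₀ hv)) hv₀.le)
      (div_nonneg (rpow_nonneg hv₀.le _) hγ.le)
    have : 0 ≤ a * Z t₀ * v⁻¹ := by positivity
    have : 0 ≤ a ^ 2 * K * T v := by positivity
    simp only [B, T, sub_self, zero_div, zero_add]
    linarith
  refine le_trans (image_le_of_deriv_right_le_deriv_boundary (f' := deriv Y)
    (fun s hs => (hYZ.differentiableAt_fst s hs.1).continuousAt.continuousWithinAt)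
    (fun s hs => (hYZ.differentiableAt_fst s hs.1).hasDerivAt.hasDerivWithinAt)
    (by simp [B]) (fun s hs => (hB s hs.1).continuousAt.continuousWithinAt)
    (fun s hs => (hB s hs.1).hasDerivWithinAt) (fun s hs => ?_) ⟨hv, le_rfl⟩) hBv
  have hZs := hYZ.snd_le ha ht₀ hs.1 fun σ hσ => hK σ ⟨hσ.1, hσ.2.trans hs.2.le⟩
  exact (hYZ.deriv_fst_le s hs.1).trans
    (mul_le_mul_of_nonneg_left hZs (mul_nonneg ha (rpow_nonneg (ht₀.le.trans hs.1) _)))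

lemma fst_le_and_snd_le (hYZ : IsSubsolution γ a t₀ Y Z) (hγ : 0 < γ) (ha : 0 ≤ a)
    (ht₀ : 0 < t₀) (hsize : 2 * a ^ 2 ≤ γ * t₀ ^ γ) (hY₀ : 0 ≤ Y t₀) (hZ₀ : 0 ≤ Z t₀)
    {t : ℝ} (ht : t₀ ≤ t) :
    Y t ≤ 2 * (Y t₀ + a * Z t₀ * t₀⁻¹) ∧
      Z t ≤ Z t₀ + 2 * a * (Y t₀ + a * Z t₀ * t₀⁻¹) * (h0 γ t - h0 γ t₀) := by
  obtain ⟨σ, hσ, hmax⟩ := isCompact_Icc.exists_isMaxOn (nonempty_Icc.2 ht)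
    fun s hs => (hYZ.differentiableAt_fst s hs.1).continuousAt.continuousWithinAt
  have hK : ∀ s ∈ Icc t₀ t, Y s ≤ Y σ := hmax
  have hK₀ : 0 ≤ Y σ := hY₀.trans (hK t₀ ⟨le_rfl, ht⟩)
  have hhalf : a ^ 2 * (t₀ ^ (-γ) / γ) ≤ 1 / 2 := by
    rw [rpow_neg ht₀.le, div_eq_mul_inv, ← mul_inv, ← div_eq_mul_inv,
      div_le_iff₀ (by positivity)]
    linarith
  have hσ_le : Y σ ≤ 2 * (Y t₀ + a * Z t₀ * t₀⁻¹) := by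
    have := hYZ.fst_le hγ ha ht₀ hZ₀ hK₀ hσ.1 fun s hs => hK s ⟨hs.1, hs.2.trans hσ.2⟩
    nlinarith [mul_le_mul_of_nonneg_left hhalf hK₀]
  refine ⟨(hK t ⟨ht, le_rfl⟩).trans hσ_le, (hYZ.snd_le ha ht₀ ht hK).trans ?_⟩
  have hΔ : 0 ≤ h0 γ t - h0 γ t₀ := sub_nonneg.2 (h0_monotoneOn ht₀ (ht₀.trans_le ht) ht)
  have := mul_le_mul_of_nonneg_right (mul_le_mul_of_nonneg_left hσ_le ha) hΔ
  linarith

end IsSubsolution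

lemma differentiableAt_mul_exp_and_deriv_le {f φ : ℝ → ℝ} {f' φ' r x : ℝ}
    (hf : HasDerivAt f f' x) (hφ : HasDerivAt φ φ' x) (hle : f' ≤ -φ' * f x + r) :
    DifferentiableAt ℝ (fun u => f u * exp (φ u)) x ∧
      deriv (fun u => f u * exp (φ u)) x ≤ r * exp (φ x) := by
  have hd : HasDerivAt (fun u => f u * exp (φ u)) _ x := hf.mul hφ.exp
  refine ⟨hd.differentiableAt, ?_⟩
  rw [hd.deriv]
  nlinarith [exp_pos (φ x)]

lemma isSubsolution_mul_exp {γ a b t₀ : ℝ} (hγ : 0 < γ) (ht₀ : 1 < t₀) {y z y' z' : ℝ → ℝ}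
    (hyd : ∀ t ∈ Ici (1:ℝ), HasDerivAt y (y' t) t) (hzd : ∀ t ∈ Ici (1:ℝ), HasDerivAt z (z' t) t)
    (hy' : ∀ t ∈ Ici (1:ℝ), |y' t| ≤ t ^ (-2 : ℝ) * h0 γ t * b * y t + t ^ (-2 : ℝ) * a * z t)
    (hz' : ∀ t ∈ Ici (1:ℝ), |z' t| ≤ t ^ (-2 : ℝ) * h0 γ t * b * z t + t ^ (-γ) * a * y t) :
    IsSubsolution γ a t₀ (fun s => y s * exp (b * (hfun γ s - hfun γ t₀)))
      (fun s => z s * exp (b * (hfun γ s - hfun γ t₀))) := by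
  set φ : ℝ → ℝ := fun s => b * (hfun γ s - hfun γ t₀)
  have hφ (s : ℝ) (hs : s ∈ Ici t₀) : HasDerivAt φ (-(b * (s ^ (-2:ℝ) * h0 γ s))) s :=
    (((hfun_hasDerivAt hγ (ht₀.trans_le hs)).sub_const _).const_mul b).congr_deriv (by ring)
  have hweight {f f' g : ℝ → ℝ} (hf : ∀ s ∈ Ici (1:ℝ), HasDerivAt f (f' s) s)
      (hf' : ∀ s ∈ Ici (1:ℝ), |f' s| ≤ s ^ (-2:ℝ) * h0 γ s * b * f s + g s) (s : ℝ)
      (hs : s ∈ Ici t₀) :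
      DifferentiableAt ℝ (fun u => f u * exp (φ u)) s ∧
        deriv (fun u => f u * exp (φ u)) s ≤ g s * exp (φ s) :=
    differentiableAt_mul_exp_and_deriv_le (hf s (ht₀.le.trans hs)) (hφ s hs)
      ((le_abs_self _).trans ((hf' s (ht₀.le.trans hs)).trans_eq (by ring)))
  exact ⟨fun s hs => (hweight hyd hy' s hs).1, fun s hs => (hweight hzd hz' s hs).1,
    fun s hs => (hweight hyd hy' s hs).2.trans_eq (by ring),
    fun s hs => (hweight hzd hz' s hs).2.trans_eq (by ring)⟩

theorem stmt_19_general (γ a b t₀ : ℝ) (hγ : 0 < γ)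
    (ha : 0 < a) (ht₀ : 1 < t₀)
    (y z y' z' : ℝ → ℝ)
    (hypos : ∀ t ∈ Set.Ici (1:ℝ), 0 ≤ y t) (hzpos : ∀ t ∈ Set.Ici (1:ℝ), 0 ≤ z t)
    (hyd : ∀ t ∈ Set.Ici (1:ℝ), HasDerivAt y (y' t) t)
    (hzd : ∀ t ∈ Set.Ici (1:ℝ), HasDerivAt z (z' t) t)
    (hy' : ∀ t ∈ Set.Ici (1:ℝ), |y' t| ≤ t ^ (-2 : ℝ) * h0 γ t * b * y t + t ^ (-2 : ℝ) * a * z t)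
    (hz' : ∀ t ∈ Set.Ici (1:ℝ), |z' t| ≤ t ^ (-2 : ℝ) * h0 γ t * b * z t + t ^ (-γ) * a * y t)
    (hsize : 2 * a ^ 2 ≤ γ * t₀ ^ γ) :
    ∀ t, t₀ ≤ t →
      y t * Real.exp (-(b * |hfun γ t - hfun γ t₀|)) ≤ 2 * (y t₀ + a * z t₀ * t₀⁻¹) ∧
      z t * Real.exp (-(b * |hfun γ t - hfun γ t₀|))
        ≤ z t₀ + 2 * a * (y t₀ + a * z t₀ * t₀⁻¹) * h0 γ t := by
  intro t ht
  obtain ⟨hYt, hZt⟩ := (isSubsolution_mul_exp hγ ht₀ hyd hzd hy' hz').fst_le_and_snd_le hγ ha.le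
    (by linarith) hsize (by simpa using hypos t₀ ht₀.le) (by simpa using hzpos t₀ ht₀.le) ht
  have hexp : -(b * |hfun γ t - hfun γ t₀|) = b * (hfun γ t - hfun γ t₀) := by
    rw [abs_of_nonpos (sub_nonpos.2 (hfun_antitoneOn hγ ht₀ (ht₀.trans_le ht) ht))]
    ring
  simp only [sub_self, mul_zero, exp_zero, mul_one] at hYt hZt
  rw [hexp]
  refine ⟨hYt, hZt.trans ?_⟩
  have hy₀ := hypos t₀ ht₀.le
  have hz₀ := hzpos t₀ ht₀.le
  have := mul_nonneg (by positivity : 0 ≤ 2 * a * (y t₀ + a * z t₀ * t₀⁻¹))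
    (h0_nonneg (γ := γ) ht₀.le)
  linarith

theorem stmt_19 (γ a b t₀ : ℝ) (hγ : 0 < γ) (hγ1 : γ ≤ 1)
    (ha : 0 < a) (hb : 0 < b) (ht₀ : 1 < t₀)
    (y z y' z' : ℝ → ℝ)
    (hypos : ∀ t ∈ Set.Ici (1:ℝ), 0 ≤ y t) (hzpos : ∀ t ∈ Set.Ici (1:ℝ), 0 ≤ z t)
    (hyd : ∀ t ∈ Set.Ici (1:ℝ), HasDerivAt y (y' t) t)
    (hzd : ∀ t ∈ Set.Ici (1:ℝ), HasDerivAt z (z' t) t)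
    (hy'c : ContinuousOn y' (Set.Ici (1:ℝ))) (hz'c : ContinuousOn z' (Set.Ici (1:ℝ)))
    (hy' : ∀ t ∈ Set.Ici (1:ℝ), |y' t| ≤ t ^ (-2 : ℝ) * h0 γ t * b * y t + t ^ (-2 : ℝ) * a * z t)
    (hz' : ∀ t ∈ Set.Ici (1:ℝ), |z' t| ≤ t ^ (-2 : ℝ) * h0 γ t * b * z t + t ^ (-γ) * a * y t)
    (hsize : 2 * a ^ 2 ≤ γ * t₀ ^ γ) :
    ∀ t, t₀ ≤ t →
      y t * Real.exp (-(b * |hfun γ t - hfun γ t₀|)) ≤ 2 * (y t₀ + a * z t₀ * t₀⁻¹) ∧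
      z t * Real.exp (-(b * |hfun γ t - hfun γ t₀|))
        ≤ z t₀ + 2 * a * (y t₀ + a * z t₀ * t₀⁻¹) * h0 γ t :=
  stmt_19_general γ a b t₀ hγ ha ht₀ y z y' z' hypos hzpos hyd hzd hy' hz' hsize
end
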